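/- Let G = (V,E) be a graph and (A, V\A) a cut of neighbourhood diversity at most k with module partition A_1,…,A_k of A and B_i = N_G(A_i) \ A. Then for every u,v ∈ A, d_G(u,v) = min( d_{G[A]}(u,v), min over 1 ≤ i ≤ k of (d_G(u,A_i) + 1 + d_G(B_i,v)) ). -/

import Mathlib

open scoped Classical

/-- `setEDist G u S` is the distance in `G` from the vertex `u` to the set `S`,
namely `min_{s ∈ S} d_G(u,s)`, with value `⊤` (i.e. `+∞`) when `S = ∅`. -/
noncomputable def setEDist {V : Type*} (G : SimpleGraph V) (u : V) (S : Set V) : ℕ∞ :=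
  ⨅ s ∈ S, G.edist u s

/-!
A walk from `u` to `v` either stays inside `A`, and is then a walk of `G[A]`, or has a first edge
`a x` leaving `A`. In the latter case `a ∈ A_i` for some `i`, hence `x ∈ B_i`, and the walk is at
least as long as `d_G(u, A_i) + 1 + d_G(x, v)`; an induction along the walk makes this precise.
Conversely, because `A_i` is a module, every vertex of `A_i` is adjacent to every vertex of
`B_i`, so each term `d_G(u, A_i) + 1 + d_G(B_i, v)` is the length of an actual walk.
-/

namespace SimpleGraph

variable {V W : Type*} {G : SimpleGraph V}

lemma edist_map_le {G' : SimpleGraph W} (f : G →g G') (u v : V) :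
    G'.edist (f u) (f v) ≤ G.edist u v :=
  le_iInf fun p => (p.length_map f) ▸ edist_le (p.map f)

lemma le_edist_of_forall_walk {u v : V} {a : ℕ∞} (h : ∀ p : G.Walk u v, a ≤ p.length) :
    a ≤ G.edist u v :=
  le_iInf h

end SimpleGraph

section SetEDist

open SimpleGraph

variable {V : Type*} {G : SimpleGraph V}

lemma setEDist_le_edist {S : Set V} {s : V} (hs : s ∈ S) (u : V) :
    setEDist G u S ≤ G.edist u s :=
  iInf₂_le s hs

lemma setEDist_eq_zero_of_mem {S : Set V} {u : V} (hu : u ∈ S) : setEDist G u S = 0 :=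
  nonpos_iff_eq_zero.1 (edist_self (G := G) (v := u) ▸ setEDist_le_edist hu u)

lemma setEDist_le_edist_add (u w : V) (S : Set V) :
    setEDist G u S ≤ G.edist u w + setEDist G w S := by
  rw [setEDist, setEDist, ENat.add_iInf₂]
  exact iInf₂_mono fun _ _ => G.edist_triangle

lemma edist_le_setEDist_add_one_add_setEDist {S T : Set V}
    (hST : ∀ a ∈ S, ∀ b ∈ T, G.Adj a b) (u v : V) :
    G.edist u v ≤ setEDist G u S + 1 + setEDist G v T := by
  rw [setEDist, ENat.iInf₂_add]
  refine ENat.le_iInf₂_add_iInf₂ fun a ha b hb => ?_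
  calc G.edist u v ≤ G.edist u a + G.edist a b + G.edist b v :=
        G.edist_triangle.trans (add_le_add_left G.edist_triangle _)
    _ = G.edist u a + 1 + G.edist v b := by
        rw [edist_eq_one_iff_adj.2 (hST a ha b hb), edist_comm (u := b)]

end SetEDist

section ModulePartition

open SimpleGraph

variable {V : Type*} {G : SimpleGraph V} {k : ℕ}

/-- Length of a shortest `u`–`v` route that reaches some `P i`, crosses one edge into `B i`,
and then goes on to `v`. -/
noncomputable def exitEDist (G : SimpleGraph V) (P B : Fin k → Set V) (u v : V) : ℕ∞ :=
  ⨅ i, setEDist G u (P i) + 1 + setEDist G v (B i)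

lemma exitEDist_le_edist_add (P B : Fin k → Set V) (u w v : V) :
    exitEDist G P B u v ≤ G.edist u w + exitEDist G P B w v := by
  rw [exitEDist, exitEDist, ENat.add_iInf]
  refine iInf_mono fun i => ?_
  rw [← add_assoc, ← add_assoc]
  gcongr
  exact setEDist_le_edist_add u w (P i)

variable {A : Set V} {P B : Fin k → Set V}

lemma exitEDist_le_one_add_edist (hcover : A ⊆ ⋃ i, P i)
    (hB : ∀ i, ∀ a ∈ P i, ∀ x ∉ A, G.Adj a x → x ∈ B i)
    {u w : V} (huw : G.Adj u w) (hu : u ∈ A) (hw : w ∉ A) (v : V) :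
    exitEDist G P B u v ≤ 1 + G.edist w v := by
  obtain ⟨i, hui⟩ := Set.mem_iUnion.1 (hcover hu)
  calc exitEDist G P B u v ≤ setEDist G u (P i) + 1 + setEDist G v (B i) := iInf_le _ i
    _ ≤ 0 + 1 + G.edist v w := by
        rw [setEDist_eq_zero_of_mem hui]
        gcongr
        exact setEDist_le_edist (hB i u hui w hw huw) v
    _ = 1 + G.edist w v := by rw [zero_add, edist_comm]

lemma min_induce_edist_exitEDist_le_length (hcover : A ⊆ ⋃ i, P i)
    (hB : ∀ i, ∀ a ∈ P i, ∀ x ∉ A, G.Adj a x → x ∈ B i)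
    {u v : V} (p : G.Walk u v) (hu : u ∈ A) (hv : v ∈ A) :
    min ((G.induce A).edist ⟨u, hu⟩ ⟨v, hv⟩) (exitEDist G P B u v) ≤ p.length := by
  induction p with
  | nil => exact (min_le_left _ _).trans_eq (by simp)
  | @cons u w v huw q ih =>
    rw [Walk.length_cons, Nat.cast_succ, add_comm]
    by_cases hw : w ∈ A
    · have hstep : (G.induce A).edist ⟨u, hu⟩ ⟨w, hw⟩ = 1 := edist_eq_one_iff_adj.2 huw
      calc min ((G.induce A).edist ⟨u, hu⟩ ⟨v, hv⟩) (exitEDist G P B u v)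
          ≤ min (1 + (G.induce A).edist ⟨w, hw⟩ ⟨v, hv⟩) (1 + exitEDist G P B w v) := by
            refine min_le_min ?_ ?_
            · exact hstep ▸ (G.induce A).edist_triangle
            · exact edist_eq_one_iff_adj.2 huw ▸ exitEDist_le_edist_add P B u w v
        _ = 1 + min ((G.induce A).edist ⟨w, hw⟩ ⟨v, hv⟩) (exitEDist G P B w v) :=
            min_add_add_left _ _ _
        _ ≤ 1 + q.length := add_le_add_right (ih hw hv) 1
    · calc min ((G.induce A).edist ⟨u, hu⟩ ⟨v, hv⟩) (exitEDist G P B u v)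
          ≤ 1 + G.edist w v :=
            (min_le_right _ _).trans (exitEDist_le_one_add_edist hcover hB huw hu hw v)
        _ ≤ 1 + q.length := add_le_add_right (edist_le q) 1

end ModulePartition

open SimpleGraph in
theorem dist_formula_inside {V : Type*} (G : SimpleGraph V)
    (A : Set V) (k : ℕ) (Apart : Fin k → Set V)
    (hcover : (⋃ i, Apart i) = A)
    (hmod : ∀ i, ∀ u ∈ Apart i, ∀ v ∈ Apart i, ∀ x ∉ A, (G.Adj u x ↔ G.Adj v x))
    (B : Fin k → Set V) (hB : ∀ i, B i = {x | x ∉ A ∧ ∃ a ∈ Apart i, G.Adj a x})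
    (u v : V) (hu : u ∈ A) (hv : v ∈ A) :
    G.edist u v =
      min ((G.induce A).edist ⟨u, hu⟩ ⟨v, hv⟩)
        (⨅ i : Fin k, (setEDist G u (Apart i) + 1 + setEDist G v (B i))) := by
  have hexit : ∀ i, ∀ a ∈ Apart i, ∀ x ∉ A, G.Adj a x → x ∈ B i :=
    fun i a ha x hx hax => (hB i).symm ▸ ⟨hx, a, ha, hax⟩
  have hcomplete : ∀ i, ∀ a ∈ Apart i, ∀ b ∈ B i, G.Adj a b := by
    intro i a ha b hb
    rw [hB i] at hb
    obtain ⟨hbA, a', ha', ha'b⟩ := hb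
    exact (hmod i a' ha' a ha b hbA).1 ha'b
  refine le_antisymm (le_min ?_ ?_) ?_
  · exact edist_map_le (Embedding.induce A).toHom ⟨u, hu⟩ ⟨v, hv⟩
  · exact le_iInf fun i => edist_le_setEDist_add_one_add_setEDist (hcomplete i) u v
  · exact le_edist_of_forall_walk fun p =>
      min_induce_edist_exitEDist_le_length hcover.ge hexit p hu hv
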